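/- arXiv:0906.0555 — 2 statements merged into one kernel-verified Lean document; each statement's English description precedes it below -/
import Mathlib

section
/- For any finite set S of points in ℝ^n with |S| = m ≥ 1, there exists a nonzero polynomial Q in n variables with real coefficients vanishing at every point of S, whose total degree is at most n·m^(1/n) (more precisely, of degree at most d whenever the dimension of the space of polynomials of degree ≤ d exceeds m, i.e. whenever (d+n choose n) > m). -/
/-!
Evaluation at the points of `S` is a linear map from the polynomials of total degree at most `d`,
a space of dimension `(d + n).choose n`, to `ℝ^S`. When that dimension exceeds `#S` the map has a
nonzero kernel, and any polynomial in it will do.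
-/

open MvPolynomial

open Finset in
theorem Finsupp.card_setOf_sum_le (σ : Type*) [Fintype σ] (d : ℕ) :
    Nat.card {s : σ →₀ ℕ | (s.sum fun _ e => e) ≤ d} =
      (d + Fintype.card σ).choose (Fintype.card σ) := by
  classical
  have hset : {s : σ →₀ ℕ | (s.sum fun _ e => e) ≤ d} =
      ↑((range (d + 1)).biUnion fun i => (univ : Finset σ).finsuppAntidiag i) := by
    ext s
    simp [Finsupp.sum_fintype]
  have hdisj : (range (d + 1) : Set ℕ).PairwiseDisjoint
      fun i => (univ : Finset σ).finsuppAntidiag i := by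
    intro i _ j _ hij
    simp only [Function.onFun]
    rw [Finset.disjoint_left]
    intro s hi hj
    exact hij ((mem_finsuppAntidiag.mp hi).1.symm.trans (mem_finsuppAntidiag.mp hj).1)
  rw [hset, Nat.card_coe_set_eq, Set.ncard_coe_finset, card_biUnion hdisj]
  simp only [card_finsuppAntidiag_nat_eq_multichoose, card_univ]
  exact Nat.sum_range_multichoose d _

theorem MvPolynomial.finrank_restrictTotalDegree (σ R : Type*) [Fintype σ] [CommRing R]
    [Nontrivial R] (d : ℕ) :
    Module.finrank R (restrictTotalDegree σ R d) =
      (d + Fintype.card σ).choose (Fintype.card σ) := by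
  rw [restrictTotalDegree, Module.finrank_eq_nat_card_basis (basisRestrictSupport R _),
    Finsupp.card_setOf_sum_le]

theorem MvPolynomial.exists_ne_zero_totalDegree_le_forall_eval_eq_zero {σ K : Type*} [Fintype σ]
    [Field K] (S : Finset (σ → K)) {d : ℕ}
    (hS : S.card < (d + Fintype.card σ).choose (Fintype.card σ)) :
    ∃ Q : MvPolynomial σ K, Q ≠ 0 ∧ Q.totalDegree ≤ d ∧ ∀ x ∈ S, eval x Q = 0 := by
  let evalOnS : restrictTotalDegree σ K d →ₗ[K] S → K :=
    LinearMap.pi (fun x : S => (aeval (x : σ → K)).toLinearMap) ∘ₗ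
      (restrictTotalDegree σ K d).subtype
  have hker : LinearMap.ker evalOnS ≠ ⊥ := LinearMap.ker_ne_bot_of_finrank_lt <| by
    rwa [Module.finrank_fintype_fun_eq_card, Fintype.card_coe, finrank_restrictTotalDegree]
  obtain ⟨⟨Q, hQd⟩, hQS, hQ0⟩ := (Submodule.ne_bot_iff _).mp hker
  refine ⟨Q, by simpa using hQ0, (mem_restrictTotalDegree _ _ _).mp hQd, fun x hx => ?_⟩
  simpa [evalOnS] using congrFun (LinearMap.mem_ker.mp hQS) ⟨x, hx⟩

theorem stmt_0_general (n : ℕ) (S : Finset (Fin n → ℝ))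
    (d : ℕ) (hd : S.card < (d + n).choose n) :
    ∃ Q : MvPolynomial (Fin n) ℝ, Q ≠ 0 ∧ Q.totalDegree ≤ d ∧
      ∀ x ∈ S, MvPolynomial.eval x Q = 0 :=
  exists_ne_zero_totalDegree_le_forall_eval_eq_zero S (by rwa [Fintype.card_fin])

theorem stmt_0 (n : ℕ) (hn : 1 ≤ n) (S : Finset (Fin n → ℝ)) (hS : 1 ≤ S.card)
    (d : ℕ) (hd : S.card < (d + n).choose n) :
    ∃ Q : MvPolynomial (Fin n) ℝ, Q ≠ 0 ∧ Q.totalDegree ≤ d ∧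
      ∀ x ∈ S, MvPolynomial.eval x Q = 0 :=
  stmt_0_general n S d hd
end

section
/- (Joints vanishing lemma) Let L be a finite set of lines in ℝ^n (n ≥ 2), let J' be a finite set of points each of which is a joint of L (i.e., lies on n lines of L with linearly independent directions), and suppose every line ℓ ∈ L that meets J' contains at least m points of J'. If Q is a nonzero polynomial of degree < m vanishing on all of J', then a contradiction arises; consequently every polynomial of degree < m vanishing on J' is zero. -/
/-!
On a line `ℓ ∈ L` through a point of `J'`, the restriction of `Q` is a univariate polynomial of
degree `< m` with at least `m` roots, so it vanishes identically; differentiating it shows that the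
derivative of `Q` at that point in the direction of `ℓ` is zero. At a joint these directions span
`ℝⁿ`, so `∇Q` vanishes on `J'`. Every `∂ᵢQ` again has degree `< m` and vanishes on `J'`, so by
induction on the degree all partial derivatives of `Q` are zero: `Q` is a constant vanishing at a
point of `J'`, hence `0`.
-/

open MvPolynomial

/-- A line in ℝⁿ, given by a base point and a nonzero direction vector. -/
structure Line (n : ℕ) where
  p : Fin n → ℝ
  v : Fin n → ℝ
  hv : v ≠ 0

/-- The set of points of a line. -/
def Line.carrier {n : ℕ} (ℓ : Line n) : Set (Fin n → ℝ) :=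
  {x | ∃ t : ℝ, x = ℓ.p + t • ℓ.v}

/-- `x` is a joint of the collection of lines `L`: it lies on `n` lines of `L`
whose directions are linearly independent. -/
def IsJoint {n : ℕ} (L : Finset (Line n)) (x : Fin n → ℝ) : Prop :=
  ∃ f : Fin n → Line n, (∀ i, f i ∈ L) ∧ (∀ i, x ∈ (f i).carrier) ∧
    LinearIndependent ℝ (fun i => (f i).v)

/-- The set of joints of `L`. -/
def joints {n : ℕ} (L : Finset (Line n)) : Set (Fin n → ℝ) :=
  {x | IsJoint L x}

open scoped Polynomial

namespace MvPolynomial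

variable {R σ : Type*}

theorem derivative_aeval [CommSemiring R] [Fintype σ] (g : σ → R[X]) (p : MvPolynomial σ R) :
    Polynomial.derivative (aeval g p) =
      ∑ i, Polynomial.derivative (g i) * aeval g (pderiv i p) := by
  classical
  induction p using MvPolynomial.induction_on with
  | C a => simp
  | add p q hp hq => simp only [map_add, hp, hq, mul_add, Finset.sum_add_distrib]
  | mul_X p j hp =>
    simp only [map_mul, aeval_X, Polynomial.derivative_mul, hp, Derivation.leibniz, pderiv_X,
      smul_eq_mul, map_add, mul_add, Finset.sum_add_distrib, Finset.sum_mul, Pi.single_apply]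
    simp [mul_assoc, mul_comm, add_comm]

theorem natDegree_aeval_le_totalDegree [CommSemiring R] {g : σ → R[X]}
    (hg : ∀ i, (g i).natDegree ≤ 1) (p : MvPolynomial σ R) :
    (aeval g p).natDegree ≤ p.totalDegree := by
  conv_lhs => rw [p.as_sum, map_sum]
  refine Polynomial.natDegree_sum_le_of_forall_le _ _ fun d hd => ?_
  rw [aeval_monomial, Algebra.algebraMap_eq_smul_one, smul_one_mul]
  refine (Polynomial.natDegree_smul_le _ _).trans <| (Polynomial.natDegree_prod_le _ _).trans <|
    le_trans (Finset.sum_le_sum fun i _ => Polynomial.natDegree_pow_le_of_le _ (hg i)) ?_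
  simpa [Finsupp.sum] using le_totalDegree hd

theorem totalDegree_pderiv_lt [CommSemiring R] {i : σ} {p : MvPolynomial σ R}
    (h : pderiv i p ≠ 0) : (pderiv i p).totalDegree < p.totalDegree := by
  have key : ∀ e ∈ (pderiv i p).support, (e.sum fun _ k => k) < p.totalDegree := by
    intro e he
    have hc : coeff (e + Finsupp.single i 1) p ≠ 0 := by
      intro h0
      rw [mem_support_iff, coeff_pderiv, h0, zero_mul] at he
      exact he rfl
    have := le_totalDegree (mem_support_iff.mpr hc)
    rw [Finsupp.sum_add_index' (fun _ => rfl) (fun _ _ _ => rfl),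
      Finsupp.sum_single_index rfl] at this
    omega
  obtain ⟨e, he⟩ := support_nonempty.mpr h
  exact (Finset.sup_lt_iff ((Nat.zero_le _).trans_lt (key e he))).mpr key

theorem eq_C_of_forall_pderiv_eq_zero [CommRing R] [IsAddTorsionFree R] {p : MvPolynomial σ R}
    (h : ∀ i, pderiv i p = 0) : p = C (p.coeff 0) := by
  refine coe_injective σ R (MvPowerSeries.pderiv.ext (fun i => ?_) ?_)
  · rw [MvPowerSeries.pderiv_coe, MvPowerSeries.pderiv_coe, h, pderiv_C]
  · simp only [← MvPowerSeries.coeff_zero_eq_constantCoeff_apply, coeff_coe, coeff_zero_C]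

theorem eq_zero_of_forall_eval_pderiv_eq_zero [CommRing R] [IsAddTorsionFree R]
    {S : Set (σ → R)} (hS : S.Nonempty) {m : ℕ}
    (hgrad : ∀ q : MvPolynomial σ R, q.totalDegree < m → (∀ x ∈ S, eval x q = 0) →
      ∀ x ∈ S, ∀ i, eval x (pderiv i q) = 0)
    {p : MvPolynomial σ R} (hp : p.totalDegree < m) (hpS : ∀ x ∈ S, eval x p = 0) : p = 0 := by
  induction hd : p.totalDegree using Nat.strong_induction_on generalizing p with
  | _ d ih =>
    have hpderiv : ∀ i, pderiv i p = 0 := fun i => by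
      by_contra hne
      have hlt := totalDegree_pderiv_lt hne
      exact hne (ih _ (hd ▸ hlt) (hlt.trans hp) (fun x hx => hgrad p hp hpS x hx i) rfl)
    obtain ⟨x, hx⟩ := hS
    have hpx := hpS x hx
    rw [eq_C_of_forall_pderiv_eq_zero hpderiv, eval_C] at hpx
    rw [eq_C_of_forall_pderiv_eq_zero hpderiv, hpx, map_zero]

end MvPolynomial

theorem Matrix.eq_zero_of_linearIndependent_of_dotProduct_eq_zero {K ι : Type*} [Field K]
    [Fintype ι] {v : ι → ι → K} (hv : LinearIndependent K v) {w : ι → K}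
    (h : ∀ j, v j ⬝ᵥ w = 0) : w = 0 := by
  classical
  have hinj : Function.Injective (Matrix.of v).mulVec :=
    Matrix.mulVec_injective_iff_isUnit.mpr (Matrix.linearIndependent_rows_iff_isUnit.mp hv)
  exact hinj (by ext j; simpa [Matrix.mulVec] using h j)

namespace Line

variable {n : ℕ}

noncomputable def restrict (ℓ : Line n) : MvPolynomial (Fin n) ℝ →ₐ[ℝ] ℝ[X] :=
  aeval fun i => Polynomial.C (ℓ.v i) * Polynomial.X + Polynomial.C (ℓ.p i)

theorem eval_restrict (ℓ : Line n) (Q : MvPolynomial (Fin n) ℝ) (t : ℝ) :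
    (ℓ.restrict Q).eval t = eval (ℓ.p + t • ℓ.v) Q := by
  rw [← Polynomial.coe_aeval_eq_eval, restrict, ← AlgHom.comp_apply, comp_aeval,
    ← MvPolynomial.coe_aeval_eq_eval]
  refine congrArg (fun f => aeval f Q) (funext fun i => ?_)
  simp only [Polynomial.coe_aeval_eq_eval, Polynomial.eval_add, Polynomial.eval_mul,
    Polynomial.eval_C, Polynomial.eval_X, Pi.add_apply, Pi.smul_apply, smul_eq_mul]
  ring

theorem natDegree_restrict_le (ℓ : Line n) (Q : MvPolynomial (Fin n) ℝ) :
    (ℓ.restrict Q).natDegree ≤ Q.totalDegree :=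
  natDegree_aeval_le_totalDegree (fun _ => Polynomial.natDegree_linear_le) Q

theorem derivative_restrict (ℓ : Line n) (Q : MvPolynomial (Fin n) ℝ) :
    Polynomial.derivative (ℓ.restrict Q) =
      ∑ i, Polynomial.C (ℓ.v i) * ℓ.restrict (pderiv i Q) := by
  simp [restrict, derivative_aeval]

theorem restrict_eq_zero_of_le_ncard {ℓ : Line n} {S : Set (Fin n → ℝ)} {m : ℕ}
    (hm : m ≤ (S ∩ ℓ.carrier).ncard) {Q : MvPolynomial (Fin n) ℝ} (hQ : Q.totalDegree < m)
    (hQS : ∀ x ∈ S, eval x Q = 0) : ℓ.restrict Q = 0 := by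
  have : Fintype ↥(S ∩ ℓ.carrier) :=
    (Set.finite_of_ncard_pos ((Nat.zero_le _).trans_lt (hQ.trans_le hm))).fintype
  choose param hparam using fun x : ↥(S ∩ ℓ.carrier) => x.2.2
  refine Polynomial.eq_zero_of_natDegree_lt_card_of_eval_eq_zero _ (f := param)
    (fun x y hxy => ?_) (fun x => ?_) ?_
  · exact Subtype.ext ((hparam x).trans (hxy ▸ (hparam y).symm))
  · rw [eval_restrict, ← hparam x]
    exact hQS x x.2.1
  · rw [Fintype.card_eq_nat_card, Nat.card_coe_set_eq]
    exact (natDegree_restrict_le ℓ Q).trans_lt (hQ.trans_le hm)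

theorem dotProduct_eval_pderiv_eq_zero {ℓ : Line n} {Q : MvPolynomial (Fin n) ℝ}
    (hQ : ℓ.restrict Q = 0) {x : Fin n → ℝ} (hx : x ∈ ℓ.carrier) :
    ℓ.v ⬝ᵥ (fun i => eval x (pderiv i Q)) = 0 := by
  obtain ⟨t, rfl⟩ := hx
  have := congrArg (Polynomial.eval t) (ℓ.derivative_restrict Q)
  simpa [hQ, Polynomial.eval_finsetSum, eval_restrict, dotProduct] using this.symm

end Line

theorem IsJoint.eval_pderiv_eq_zero {n : ℕ} {L : Finset (Line n)} {x : Fin n → ℝ}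
    (hx : IsJoint L x) {Q : MvPolynomial (Fin n) ℝ}
    (hQ : ∀ ℓ ∈ L, x ∈ ℓ.carrier → ℓ.restrict Q = 0) (i : Fin n) :
    eval x (pderiv i Q) = 0 := by
  obtain ⟨f, hfL, hxf, hf⟩ := hx
  exact congrFun (Matrix.eq_zero_of_linearIndependent_of_dotProduct_eq_zero hf fun j =>
    Line.dotProduct_eval_pderiv_eq_zero (hQ _ (hfL j) (hxf j)) (hxf j)) i

theorem stmt_6_general (n : ℕ) (L : Finset (Line n))
    (J' : Finset (Fin n → ℝ)) (hJ'ne : J'.Nonempty)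
    (hjoint : ∀ x ∈ J', IsJoint L x) (m : ℕ)
    (hmeet : ∀ ℓ ∈ L, ((J' : Set (Fin n → ℝ)) ∩ ℓ.carrier).Nonempty →
      m ≤ ((J' : Set (Fin n → ℝ)) ∩ ℓ.carrier).ncard)
    (Q : MvPolynomial (Fin n) ℝ) (hdeg : Q.totalDegree < m)
    (hvan : ∀ x ∈ J', MvPolynomial.eval x Q = 0) :
    Q = 0 := by
  refine eq_zero_of_forall_eval_pderiv_eq_zero (S := (J' : Set (Fin n → ℝ)))
    (Finset.coe_nonempty.mpr hJ'ne) (fun q hq hqJ x hx => ?_) hdeg hvan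
  exact (hjoint x hx).eval_pderiv_eq_zero fun ℓ hℓ hxℓ =>
    ℓ.restrict_eq_zero_of_le_ncard (hmeet ℓ hℓ ⟨x, hx, hxℓ⟩) hq hqJ

theorem stmt_6 (n : ℕ) (hn : 2 ≤ n) (L : Finset (Line n))
    (J' : Finset (Fin n → ℝ)) (hJ'ne : J'.Nonempty)
    (hjoint : ∀ x ∈ J', IsJoint L x) (m : ℕ)
    (hmeet : ∀ ℓ ∈ L, ((J' : Set (Fin n → ℝ)) ∩ ℓ.carrier).Nonempty →
      m ≤ ((J' : Set (Fin n → ℝ)) ∩ ℓ.carrier).ncard)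
    (Q : MvPolynomial (Fin n) ℝ) (hdeg : Q.totalDegree < m)
    (hvan : ∀ x ∈ J', MvPolynomial.eval x Q = 0) :
    Q = 0 :=
  stmt_6_general n L J' hJ'ne hjoint m hmeet Q hdeg hvan
end
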